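/- The map x ↦ y*(x) assigning to each x the unique minimizer of g(x,·) is Lipschitz continuous with constant L_y := C_{gxy}/μ_g; that is, ‖y*(x₁) − y*(x₂)‖ ≤ (C_{gxy}/μ_g)‖x₁ − x₂‖ for all x₁, x₂ ∈ E. -/

import Mathlib

/-! At a minimizer the partial gradient vanishes, so `∇_y g(x₁, y₁) = 0 = ∇_y g(x₂, y₂)` for
`yᵢ = y*(xᵢ)`. Strong convexity makes `∇_y g(x₁, ·)` strongly monotone, whence
`μ_g ‖y₁ - y₂‖² ≤ ⟪∇_y g(x₁, y₁) - ∇_y g(x₁, y₂), y₁ - y₂⟫`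
`            = ⟪∇_y g(x₂, y₂) - ∇_y g(x₁, y₂), y₁ - y₂⟫`.
The mean value inequality bounds the last gradient difference by `C_{gxy} ‖x₁ - x₂‖`, because
the adjoint `∇²_{xy} g` has the same norm as the derivative of `x ↦ ∇_y g(x, y)`. -/

open scoped RealInnerProductSpace

noncomputable section

variable {E F : Type*} [NormedAddCommGroup E] [InnerProductSpace ℝ E] [FiniteDimensional ℝ E]
  [NormedAddCommGroup F] [InnerProductSpace ℝ F] [FiniteDimensional ℝ F]

/-- Gradient of `g(x, ·)` at `y`. -/
def grady (g : E × F → ℝ) (x : E) (y : F) : F := gradient (fun y' => g (x, y')) y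

/-- Mixed second derivative `∇²_{xy} g(x,y) : F →L[ℝ] E`, the adjoint of the derivative at `x`
of the map `x ↦ ∇_y g(x,y)`. -/
def hessxy (g : E × F → ℝ) (x : E) (y : F) : F →L[ℝ] E :=
  ContinuousLinearMap.adjoint (fderiv ℝ (fun x' => grady g x' y) x)

section Convex

variable {X : Type*} [NormedAddCommGroup X] [NormedSpace ℝ X]

theorem ConvexOn.fderiv_apply_sub_le {h : X → ℝ} (hconv : ConvexOn ℝ Set.univ h)
    (hd : Differentiable ℝ h) (a b : X) :
    fderiv ℝ h b (a - b) ≤ fderiv ℝ h a (a - b) := by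
  have hline : ConvexOn ℝ Set.univ (h ∘ AffineMap.lineMap b a) :=
    hconv.comp_affineMap (AffineMap.lineMap b a)
  have hderiv : ∀ t : ℝ, HasDerivAt (h ∘ AffineMap.lineMap b a)
      (fderiv ℝ h (AffineMap.lineMap b a t) (a - b)) t := fun t =>
    (hd _).hasFDerivAt.comp_hasDerivAt t AffineMap.hasDerivAt_lineMap
  have h0 := hline.le_slope_of_hasDerivAt (Set.mem_univ 0) (Set.mem_univ 1) one_pos (hderiv 0)
  have h1 := hline.slope_le_of_hasDerivAt (Set.mem_univ 0) (Set.mem_univ 1) one_pos (hderiv 1)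
  simpa using h0.trans h1

end Convex

section Gradient

variable {H : Type*} [NormedAddCommGroup H] [InnerProductSpace ℝ H]

theorem mul_norm_le_norm_of_mul_sq_le_inner {μ : ℝ} {v w : H} (h : μ * ‖w‖ ^ 2 ≤ ⟪v, w⟫) :
    μ * ‖w‖ ≤ ‖v‖ := by
  rcases (norm_nonneg w).eq_or_lt with hw | hw
  · simp [← hw]
  · refine le_of_mul_le_mul_right ?_ hw
    calc μ * ‖w‖ * ‖w‖ = μ * ‖w‖ ^ 2 := by ring
      _ ≤ ⟪v, w⟫ := h
      _ ≤ ‖v‖ * ‖w‖ := real_inner_le_norm v w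

variable [CompleteSpace H]

theorem IsLocalMin.gradient_eq_zero {f : H → ℝ} {a : H} (h : IsLocalMin f a) :
    gradient f a = 0 := by
  simp [gradient, h.fderiv_eq_zero]

theorem StrongConvexOn.inner_gradient_sub_gradient_ge {f : H → ℝ} {μ : ℝ}
    (hconv : StrongConvexOn Set.univ μ f) (hf : Differentiable ℝ f) (a b : H) :
    μ * ‖a - b‖ ^ 2 ≤ ⟪gradient f a - gradient f b, a - b⟫ := by
  have hq : ∀ y, HasFDerivAt (fun y : H => f y - μ / 2 * ‖y‖ ^ 2)
      (fderiv ℝ f y - (μ / 2) • 2 • innerSL ℝ y) y := fun y =>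
    (hf y).hasFDerivAt.sub ((hasFDerivAt_id y).norm_sq.const_mul (μ / 2))
  have key := (strongConvexOn_iff_convex.1 hconv).fderiv_apply_sub_le
    (fun y => (hq y).differentiableAt) a b
  simp only [(hq _).fderiv, sub_apply, smul_apply, innerSL_apply_apply, smul_eq_mul,
    nsmul_eq_mul, Nat.cast_ofNat] at key
  have hsq : ‖a - b‖ ^ 2 = ⟪a, a - b⟫ - ⟪b, a - b⟫ := by
    rw [← inner_sub_left, real_inner_self_eq_norm_sq]
  rw [inner_sub_left, inner_gradient_left, inner_gradient_left, hsq]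
  linarith

end Gradient

section PartialGradient

variable {X : Type*} [NormedAddCommGroup X] [NormedSpace ℝ X]

theorem grady_eq_toDual_symm {g : X × F → ℝ} {x : X} {y : F}
    (hg : DifferentiableAt ℝ g (x, y)) :
    grady g x y =
      (InnerProductSpace.toDual ℝ F).symm ((fderiv ℝ g (x, y)).comp (.inr ℝ X F)) := by
  have hslice : HasFDerivAt (fun y' => g (x, y')) ((fderiv ℝ g (x, y)).comp (.inr ℝ X F)) y :=
    hg.hasFDerivAt.comp y (hasFDerivAt_prodMk_right x y)
  rw [grady, gradient, hslice.fderiv]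

theorem differentiable_grady_left {g : X × F → ℝ} (hg : ContDiff ℝ 2 g) (y : F) :
    Differentiable ℝ (fun x => grady g x y) := by
  have hfderiv : Differentiable ℝ (fun x => fderiv ℝ g (x, y)) :=
    ((hg.fderiv_right (m := 1) le_rfl).differentiable one_ne_zero).comp
      (differentiable_id.prodMk (differentiable_const y))
  have htoDual : Differentiable ℝ (InnerProductSpace.toDual ℝ F).symm :=
    ((InnerProductSpace.toDual ℝ F).symm.toContinuousLinearEquiv :
      StrongDual ℝ F ≃L[ℝ] F).differentiable
  simp_rw [grady_eq_toDual_symm ((hg.differentiable two_ne_zero) _)]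
  exact htoDual.comp (hfderiv.clm_comp (differentiable_const _))

end PartialGradient

theorem norm_grady_sub_le {g : E × F → ℝ} {C : ℝ} (hg : ContDiff ℝ 2 g) {y : F}
    (hC : ∀ x, ‖hessxy g x y‖ ≤ C) (x₁ x₂ : E) :
    ‖grady g x₁ y - grady g x₂ y‖ ≤ C * ‖x₁ - x₂‖ :=
  convex_univ.norm_image_sub_le_of_norm_fderiv_le
    (fun x _ => differentiable_grady_left hg y x)
    (fun x _ => by simpa only [hessxy, LinearIsometryEquiv.norm_map] using hC x)
    (Set.mem_univ x₂) (Set.mem_univ x₁)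

theorem minimizer_lipschitz_general
    (g : E × F → ℝ) (ystar : E → F) (μg Cgxy : ℝ)
    (hg : ContDiff ℝ 2 g)
    (hμ : 0 < μg)
    (hsc : ∀ x : E, ConvexOn ℝ Set.univ (fun y : F => g (x, y) - μg / 2 * ‖y‖ ^ 2))
    (hgxyb : ∀ x y, ‖hessxy g x y‖ ≤ Cgxy)
    (hmin : ∀ x y, g (x, ystar x) ≤ g (x, y)) :
    ∀ x₁ x₂ : E, ‖ystar x₁ - ystar x₂‖ ≤ (Cgxy / μg) * ‖x₁ - x₂‖ := by
  intro x₁ x₂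
  have hslice : ∀ x, Differentiable ℝ (fun y => g (x, y)) := fun x =>
    (hg.differentiable two_ne_zero).comp ((differentiable_const x).prodMk differentiable_id)
  have hcrit : ∀ x, grady g x (ystar x) = 0 := fun x =>
    IsLocalMin.gradient_eq_zero (Filter.Eventually.of_forall (hmin x))
  have hmono := (strongConvexOn_iff_convex.2 (hsc x₁)).inner_gradient_sub_gradient_ge
    (hslice x₁) (ystar x₁) (ystar x₂)
  rw [← grady, ← grady, hcrit x₁, ← hcrit x₂] at hmono
  calc ‖ystar x₁ - ystar x₂‖
      ≤ ‖grady g x₂ (ystar x₂) - grady g x₁ (ystar x₂)‖ / μg :=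
        (le_div_iff₀' hμ).2 (mul_norm_le_norm_of_mul_sq_le_inner hmono)
    _ ≤ Cgxy * ‖x₂ - x₁‖ / μg :=
        div_le_div_of_nonneg_right (norm_grady_sub_le hg (hgxyb · _) x₂ x₁) hμ.le
    _ = Cgxy / μg * ‖x₁ - x₂‖ := by rw [norm_sub_rev]; ring

/-- Lemma 1 (second claim): the lower-level minimizer map `x ↦ y*(x)` is
`L_y = C_{gxy}/μ_g`-Lipschitz. -/
theorem minimizer_lipschitz
    (g : E × F → ℝ) (ystar : E → F) (μg Cgxy : ℝ)
    (hg : ContDiff ℝ 2 g)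
    (hμ : 0 < μg)
    (hsc : ∀ x : E, ConvexOn ℝ Set.univ (fun y : F => g (x, y) - μg / 2 * ‖y‖ ^ 2))
    (hgxyb : ∀ x y, ‖hessxy g x y‖ ≤ Cgxy)
    (hmin : ∀ x y, g (x, ystar x) ≤ g (x, y))
    (huniq : ∀ x y, (∀ z, g (x, y) ≤ g (x, z)) → y = ystar x) :
    ∀ x₁ x₂ : E, ‖ystar x₁ - ystar x₂‖ ≤ (Cgxy / μg) * ‖x₁ - x₂‖ :=
  minimizer_lipschitz_general g ystar μg Cgxy hg hμ hsc hgxyb hmin
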